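/- Let M be a 3×3 real symmetric positive definite matrix, g: S² → ℝ continuous, and define F(x) = ∫_{S²} max(1 − α(x,ω)², 0) · g(ω) (Mω·ω)^{-1/2} dH²(ω), where α(x,ω) = (x·ω)(Mω·ω)^{-1/2}. Then for every x in the interior of E = { y ∈ ℝ³ : M⁻¹y · y ≤ 1 }, F(x) = ∫_{S²} g(ω) (Mω·ω)^{-1/2} dH²(ω) − Σ_{i,j=1}^{3} x_i x_j ∫_{S²} ω_i ω_j g(ω) (Mω·ω)^{-3/2} dH²(ω); in particular, F restricted to E is a quadratic polynomial. -/

import Mathlib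

open MeasureTheory Metric Matrix
open scoped ENNReal

noncomputable section

abbrev E3 := EuclideanSpace ℝ (Fin 3)

/-- The anisotropic kernel `W(x) = |x|⁻¹ Ψ(x/|x|)` as a real-valued function. -/
def W (Ψ : E3 → ℝ) (x : E3) : ℝ := ‖x‖⁻¹ * Ψ (‖x‖⁻¹ • x)

open Classical in
/-- The kernel with the convention `W(0) = +∞`, with values in `ℝ≥0∞`. -/
def kern (Ψ : E3 → ℝ) (x : E3) : ℝ≥0∞ :=
  if x = 0 then ∞ else ENNReal.ofReal (W Ψ x)

/-- The nonlocal energy `I(μ) = ∬ W(x-y) dμ(y) dμ(x) + ∫ |x|² dμ(x)`. -/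
def energy (Ψ : E3 → ℝ) (μ : Measure E3) : ℝ≥0∞ :=
  (∫⁻ x, ∫⁻ y, kern Ψ (x - y) ∂μ ∂μ) + ∫⁻ x, ENNReal.ofReal (‖x‖ ^ 2) ∂μ

/-- Fourier transform with the convention `φ̂(ξ) = (2π)^{-3/2} ∫ φ(x) e^{-i ξ·x} dx`. -/
def ftransform (φ : E3 → ℂ) (ξ : E3) : ℂ :=
  ((((2 * Real.pi) ^ ((3:ℝ)/2))⁻¹ : ℝ) : ℂ) *
    ∫ x : E3, φ x * Complex.exp (-((inner ℝ ξ x : ℝ) : ℂ) * Complex.I)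

/-- The hypothesis that the Fourier transform of `W` is `h(ξ/|ξ|)|ξ|⁻²`, in the sense of
tempered distributions: `∫ W(x) φ̂(x) dx = ∫ h(ξ/|ξ|)|ξ|⁻² φ(ξ) dξ` for every Schwartz `φ`. -/
def FourierRep (Ψ h : E3 → ℝ) : Prop :=
  ∀ φ : SchwartzMap E3 ℂ,
    ∫ x : E3, (W Ψ x : ℂ) * ftransform (fun y => φ y) x
      = ∫ ξ : E3, ((h (‖ξ‖⁻¹ • ξ) : ℝ) : ℂ) * (((‖ξ‖ ^ 2)⁻¹ : ℝ) : ℂ) * φ ξ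

/-- Membership in `SO(3)`. -/
def IsSO3 (R : Matrix (Fin 3) (Fin 3) ℝ) : Prop := R * Rᵀ = 1 ∧ R.det = 1

/-- The solid ellipsoid `R D(a) B̄`. -/
def ellipsoid (a : Fin 3 → ℝ) (R : Matrix (Fin 3) (Fin 3) ℝ) : Set E3 :=
  (Matrix.toEuclideanLin (R * Matrix.diagonal a)) '' Metric.closedBall 0 1

/-- The ellipsoid law: normalised Lebesgue measure on the ellipsoid. -/
def ellipsoidLaw (a : Fin 3 → ℝ) (R : Matrix (Fin 3) (Fin 3) ℝ) : Measure E3 :=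
  (volume (ellipsoid a R))⁻¹ • volume.restrict (ellipsoid a R)

/-- The semi-ellipsoid law supported on the ellipse `R Ẽ₀(a₁,a₂)`: the pushforward under
`(x₁,x₂) ↦ R(x₁,x₂,0)` of the measure on `ℝ²` with density
`(3/(2π a₁ a₂))·√(1 − x₁²/a₁² − x₂²/a₂²)` (the density vanishes outside the ellipse). -/
def semiEllipsoidLaw (a₁ a₂ : ℝ) (R : Matrix (Fin 3) (Fin 3) ℝ) : Measure E3 :=
  Measure.map
    (fun p : ℝ × ℝ =>
      Matrix.toEuclideanLin R ((EuclideanSpace.equiv (Fin 3) ℝ).symm ![p.1, p.2, 0]))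
    ((volume : Measure (ℝ × ℝ)).withDensity fun p =>
      ENNReal.ofReal ((3 / (2 * Real.pi * a₁ * a₂)) *
        Real.sqrt (1 - p.1 ^ 2 / a₁ ^ 2 - p.2 ^ 2 / a₂ ^ 2)))

/-- The quadratic form `Mω·ω`. -/
def qf (M : Matrix (Fin 3) (Fin 3) ℝ) (ω : E3) : ℝ := inner ℝ (Matrix.toEuclideanLin M ω) ω

/-- `α(x,ω) = (x·ω)(Mω·ω)^{-1/2}`. -/
def alphaM (M : Matrix (Fin 3) (Fin 3) ℝ) (x ω : E3) : ℝ :=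
  (inner ℝ x ω : ℝ) / Real.sqrt (qf M ω)

/-- `F(x) = ∫_{S²} max(1 − α(x,ω)², 0) g(ω) (Mω·ω)^{-1/2} dH²(ω)`. -/
def Ffun (M : Matrix (Fin 3) (Fin 3) ℝ) (g : E3 → ℝ) (x : E3) : ℝ :=
  ∫ ω in Metric.sphere (0:E3) 1,
    max (1 - alphaM M x ω ^ 2) 0 * g ω * (Real.sqrt (qf M ω))⁻¹ ∂μH[2]

/-!
On the closed ellipsoid `M⁻¹x·x ≤ 1`, Cauchy–Schwarz for the positive form `(u, v) ↦ Mu·v`,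
applied to `u = M⁻¹x` and `v = ω`, gives `(x·ω)² ≤ (M⁻¹x·x)(Mω·ω) ≤ Mω·ω`, that is `α(x,ω)² ≤ 1`.
So the truncation `max(·, 0)` never acts, and expanding `(x·ω)² = Σᵢⱼ xᵢxⱼωᵢωⱼ` makes `F` the
stated quadratic polynomial by linearity of the integral. The integrals involved are finite
because `H²(S²) < ∞`: the sphere is the image of a compact rectangle under spherical
coordinates, a `C¹` and hence Lipschitz map on it.
-/

open Real Set Module

theorem hausdorffMeasure_image_lt_top_of_contDiff
    {E F : Type*} [NormedAddCommGroup E] [NormedSpace ℝ E] [FiniteDimensional ℝ E]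
    [MeasurableSpace E] [BorelSpace E] [NormedAddCommGroup F] [NormedSpace ℝ F]
    [MeasurableSpace F] [BorelSpace F] {f : E → F} (hf : ContDiff ℝ 1 f) {K : Set E}
    (hK : IsCompact K) : μH[finrank ℝ E] (f '' K) < ∞ := by
  obtain ⟨C, hC⟩ := hf.locallyLipschitz.locallyLipschitzOn.exists_lipschitzOnWith_of_compact hK
  calc μH[finrank ℝ E] (f '' K) ≤ (C : ℝ≥0∞) ^ (finrank ℝ E : ℝ) * μH[finrank ℝ E] K :=
        hC.hausdorffMeasure_image_le (Nat.cast_nonneg _)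
    _ < ∞ := ENNReal.mul_lt_top (by simp) hK.measure_lt_top

theorem LinearMap.IsPositive.real_inner_sq_le {E : Type*} [NormedAddCommGroup E]
    [InnerProductSpace ℝ E] {T : E →ₗ[ℝ] E} (hT : T.IsPositive) (u v : E) :
    inner ℝ (T u) v ^ 2 ≤ inner ℝ (T u) u * inner ℝ (T v) v := by
  have h := LinearMap.BilinForm.apply_mul_apply_le_of_forall_zero_le ((innerₗ E).comp T)
    hT.inner_nonneg_left u v
  simp only [LinearMap.comp_apply, innerₗ_apply_apply] at h
  rwa [hT.isSymmetric v u, real_inner_comm (T u) v, ← sq] at h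

theorem sum_sum_mul_mul_eq_inner_sq {ι : Type*} [Fintype ι] (x ω : EuclideanSpace ℝ ι) :
    ∑ i, ∑ j, x i * x j * (ω i * ω j) = inner ℝ x ω ^ 2 := by
  simp only [PiLp.inner_apply, RCLike.inner_apply, conj_trivial, sq, Finset.sum_mul_sum]
  exact Finset.sum_congr rfl fun i _ => Finset.sum_congr rfl fun j _ => by ring

theorem integral_sub_sum_sum_mul {α ι κ : Type*} [MeasurableSpace α] {μ : Measure α}
    [Fintype ι] [Fintype κ] {f : α → ℝ} {h : ι → κ → α → ℝ} (c : ι → κ → ℝ)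
    (hf : Integrable f μ) (hh : ∀ i j, Integrable (h i j) μ) :
    ∫ a, (f a - ∑ i, ∑ j, c i j * h i j a) ∂μ
      = ∫ a, f a ∂μ - ∑ i, ∑ j, c i j * ∫ a, h i j a ∂μ := by
  have hch : ∀ i j, Integrable (fun a => c i j * h i j a) μ := fun i j => (hh i j).const_mul _
  rw [integral_sub hf (integrable_finsetSum _ fun i _ => integrable_finsetSum _ fun j _ => hch i j),
    integral_finsetSum _ fun i _ => integrable_finsetSum _ fun j _ => hch i j]
  simp_rw [integral_finsetSum _ fun j _ => hch _ j, integral_const_mul]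

def sphericalCoords (p : ℝ × ℝ) : E3 := !₂[cos p.1 * sin p.2, sin p.1 * sin p.2, cos p.2]

theorem contDiff_sphericalCoords : ContDiff ℝ 1 sphericalCoords := by
  refine (contDiff_piLp 2).2 fun i => ?_
  fin_cases i <;> simp [sphericalCoords] <;> fun_prop

theorem sphere_subset_image_sphericalCoords :
    sphere (0 : E3) 1 ⊆ sphericalCoords '' (Icc (-π) π ×ˢ Icc 0 π) := by
  intro ω hω
  have hsum : ω 0 ^ 2 + ω 1 ^ 2 + ω 2 ^ 2 = 1 := by
    have := EuclideanSpace.real_norm_sq_eq ω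
    rw [mem_sphere_zero_iff_norm.1 hω] at this
    simpa [Fin.sum_univ_three] using this.symm
  have hz : ‖(⟨ω 0, ω 1⟩ : ℂ)‖ = √(1 - ω 2 ^ 2) := by
    rw [Complex.norm_def, Complex.normSq_mk]; congr 1; linarith
  refine ⟨(Complex.arg ⟨ω 0, ω 1⟩, arccos (ω 2)),
    ⟨⟨(Complex.neg_pi_lt_arg _).le, Complex.arg_le_pi _⟩, arccos_nonneg _, arccos_le_pi _⟩, ?_⟩
  ext i
  fin_cases i
  · simp [sphericalCoords, sin_arccos, ← hz, mul_comm, Complex.norm_mul_cos_arg]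
  · simp [sphericalCoords, sin_arccos, ← hz, mul_comm, Complex.norm_mul_sin_arg]
  · simp [sphericalCoords, cos_arccos (by nlinarith : -1 ≤ ω 2) (by nlinarith : ω 2 ≤ 1)]

theorem hausdorffMeasure_unitSphere_lt_top : μH[2] (sphere (0 : E3) 1) < ∞ := by
  have h := hausdorffMeasure_image_lt_top_of_contDiff contDiff_sphericalCoords
    (isCompact_Icc.prod isCompact_Icc : IsCompact (Icc (-π) π ×ˢ Icc 0 π))
  rw [finrank_prod, finrank_self] at h
  exact (measure_mono sphere_subset_image_sphericalCoords).trans_lt (by exact_mod_cast h)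

theorem ContinuousOn.integrableOn_unitSphere {F : Type*} [NormedAddCommGroup F] {f : E3 → F}
    (hf : ContinuousOn f (sphere 0 1)) : IntegrableOn f (sphere 0 1) μH[2] :=
  hf.integrableOn_of_subset_isCompact (isCompact_sphere 0 1) isClosed_sphere.measurableSet
    subset_rfl hausdorffMeasure_unitSphere_lt_top.ne

theorem qf_pos {M : Matrix (Fin 3) (Fin 3) ℝ} (hM : M.PosDef) {v : E3} (hv : v ≠ 0) :
    0 < qf M v := by
  have := hM.dotProduct_mulVec_pos (x := v.ofLp) (by simpa using hv)
  simpa [qf, PiLp.inner_apply, Matrix.toLpLin_apply, dotProduct, mul_comm] using this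

theorem inner_sq_le_qf_inv_mul_qf {M : Matrix (Fin 3) (Fin 3) ℝ} (hM : M.PosDef) (x ω : E3) :
    inner ℝ x ω ^ 2 ≤ qf M⁻¹ x * qf M ω := by
  have hx : Matrix.toEuclideanLin M (Matrix.toEuclideanLin M⁻¹ x) = x := by
    simp [Matrix.toLpLin_apply, Matrix.mulVec_mulVec,
      Matrix.mul_nonsing_inv _ (isUnit_iff_ne_zero.2 hM.det_pos.ne')]
  have h := (Matrix.isPositive_toEuclideanLin_iff.2 hM.posSemidef).real_inner_sq_le
    (Matrix.toEuclideanLin M⁻¹ x) ω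
  rwa [hx, real_inner_comm (Matrix.toEuclideanLin M⁻¹ x) x] at h

theorem alphaM_sq_le {M : Matrix (Fin 3) (Fin 3) ℝ} (hM : M.PosDef) (x : E3) {ω : E3}
    (hω : ω ≠ 0) : alphaM M x ω ^ 2 ≤ qf M⁻¹ x := by
  rw [alphaM, div_pow, sq_sqrt (qf_pos hM hω).le, div_le_iff₀ (qf_pos hM hω)]
  exact inner_sq_le_qf_inv_mul_qf hM x ω

theorem Ffun_integrand_eq {M : Matrix (Fin 3) (Fin 3) ℝ} (hM : M.PosDef) (g : E3 → ℝ)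
    {x ω : E3} (hx : qf M⁻¹ x ≤ 1) (hω : ω ≠ 0) :
    max (1 - alphaM M x ω ^ 2) 0 * g ω * (√(qf M ω))⁻¹
      = g ω * (√(qf M ω))⁻¹
        - ∑ i, ∑ j, x i * x j * (ω i * ω j * g ω * (qf M ω ^ (3 / 2 : ℝ))⁻¹) := by
  have hq := qf_pos hM hω
  have hsum : ∑ i, ∑ j, x i * x j * (ω i * ω j * g ω * (qf M ω ^ (3 / 2 : ℝ))⁻¹)
      = inner ℝ x ω ^ 2 * (g ω * (√(qf M ω) ^ 3)⁻¹) := by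
    simp only [← sum_sum_mul_mul_eq_inner_sq, Finset.sum_mul, rpow_div_two_eq_sqrt _ hq.le,
      rpow_ofNat]
    exact Finset.sum_congr rfl fun i _ => Finset.sum_congr rfl fun j _ => by ring
  rw [max_eq_left (by linarith [alphaM_sq_le hM x hω]), hsum, alphaM]
  field_simp [(sqrt_pos.2 hq).ne']

/-- on the interior of the ellipsoid `E = {y : M⁻¹y·y ≤ 1}`, `F` equals the
explicit quadratic polynomial
`∫ g(ω)(Mω·ω)^{-1/2} dH² − ∑_{i,j} x_i x_j ∫ ω_i ω_j g(ω)(Mω·ω)^{-3/2} dH²`. -/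
theorem Ffun_quadratic_inside
    (M : Matrix (Fin 3) (Fin 3) ℝ) (hM : M.PosDef)
    (g : E3 → ℝ) (hg : ContinuousOn g (Metric.sphere (0:E3) 1))
    (x : E3) (hx : x ∈ interior {y : E3 | qf M⁻¹ y ≤ 1}) :
    Ffun M g x
      = (∫ ω in Metric.sphere (0:E3) 1, g ω * (Real.sqrt (qf M ω))⁻¹ ∂μH[2])
        - ∑ i : Fin 3, ∑ j : Fin 3, x i * x j *
            ∫ ω in Metric.sphere (0:E3) 1,
              ω i * ω j * g ω * ((qf M ω) ^ ((3:ℝ)/2))⁻¹ ∂μH[2] := by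
  have hne : ∀ ω ∈ sphere (0 : E3) 1, ω ≠ 0 := fun ω hω => ne_zero_of_mem_unit_sphere ⟨ω, hω⟩
  have hq : ∀ ω ∈ sphere (0 : E3) 1, 0 < qf M ω := fun ω hω => qf_pos hM (hne ω hω)
  have hqc : Continuous (qf M) := by unfold qf; fun_prop
  have hxE : qf M⁻¹ x ≤ 1 := interior_subset (s := {y | qf M⁻¹ y ≤ 1}) hx
  rw [Ffun, setIntegral_congr_fun isClosed_sphere.measurableSet
    fun ω hω => Ffun_integrand_eq hM g hxE (hne ω hω)]
  refine integral_sub_sum_sum_mul _ ?_ fun i j => ?_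
  · refine (hg.mul ?_).integrableOn_unitSphere
    exact hqc.continuousOn.sqrt.inv₀ fun ω hω => (sqrt_pos.2 (hq ω hω)).ne'
  · refine ((Continuous.continuousOn (by fun_prop)).mul hg |>.mul ?_).integrableOn_unitSphere
    exact (hqc.continuousOn.rpow_const fun ω hω => .inl (hq ω hω).ne').inv₀
      fun ω hω => (rpow_pos_of_pos (hq ω hω) _).ne'

end
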